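/- arXiv:0908.3855 — 2 statements merged into one kernel-verified Lean document; each statement's English description precedes it below -/
import Mathlib

section
/- (Directional Hilbert transform of a bandlimited windowed plane wave.) Let Ω > 0, let u ∈ ℝ² be a unit vector, and let φ : ℝ² → ℂ be integrable with 𝓕φ(ω) = 0 whenever ‖ω‖ ≥ Ω. Then for every ω ∈ ℝ², 𝓕(x ↦ φ(x)·sin(2π Ω ⟨u, x⟩))(ω) = −i·sign(⟨u, ω⟩)·𝓕(x ↦ φ(x)·cos(2π Ω ⟨u, x⟩))(ω). That is, the directional Hilbert transform along u takes the windowed directional cosine to the windowed directional sine, preserving the window. -/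
open MeasureTheory
open scoped FourierTransform Real RealInnerProductSpace

/-!
Write `sin (2π⟪x, v⟫)` and `cos (2π⟪x, v⟫)` as combinations of the characters `𝐞 (±⟪x, v⟫)`.
Modulation by `𝐞 (±⟪x, v⟫)` translates `𝓕 φ` by `∓v`, so both Fourier transforms are combinations
of `𝓕 φ (ω - v)` and `𝓕 φ (ω + v)`. When `⟪v, ω⟫ ≥ 0`, the point `ω + v` lies outside the open
ball of radius `‖v‖`, so the band limit kills `𝓕 φ (ω + v)`; when `⟪v, ω⟫ ≤ 0`, it kills
`𝓕 φ (ω - v)`. On each half-space the sine transform is therefore `∓i` times the cosine transform.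
-/

theorem Real.sign_mul_of_pos {a : ℝ} (ha : 0 < a) (b : ℝ) : Real.sign (a * b) = Real.sign b := by
  rcases lt_trichotomy b 0 with hb | rfl | hb
  · rw [Real.sign_of_neg hb, Real.sign_of_neg (mul_neg_of_pos_of_neg ha hb)]
  · rw [mul_zero]
  · rw [Real.sign_of_pos hb, Real.sign_of_pos (mul_pos ha hb)]

section

variable {V : Type*} [NormedAddCommGroup V] [InnerProductSpace ℝ V]

theorem norm_le_norm_add_of_inner_nonneg {v w : V} (h : 0 ≤ ⟪v, w⟫) : ‖v‖ ≤ ‖w + v‖ := by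
  refine le_of_pow_le_pow_left₀ two_ne_zero (norm_nonneg _) ?_
  rw [norm_add_sq_real, real_inner_comm]
  nlinarith [sq_nonneg ‖w‖]

theorem norm_le_norm_sub_of_inner_nonpos {v w : V} (h : ⟪v, w⟫ ≤ 0) : ‖v‖ ≤ ‖w - v‖ := by
  simpa [sub_eq_add_neg] using norm_le_norm_add_of_inner_nonneg (v := -v) (w := w)
    (by rwa [inner_neg_left, neg_nonneg])

variable [MeasurableSpace V] [BorelSpace V] [FiniteDimensional ℝ V]

namespace Real

theorem fourier_fourierChar_smul {E : Type*} [NormedAddCommGroup E] [NormedSpace ℂ E]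
    (f : V → E) (v w : V) :
    𝓕 (fun x ↦ 𝐞 ⟪x, v⟫ • f x) w = 𝓕 f (w - v) := by
  rw [fourier_eq, fourier_eq]
  congr! 2 with x
  rw [smul_smul, ← AddChar.map_add_eq_mul, inner_sub_right]
  ring_nf

theorem fourier_mul_fourierChar_combination (f : V → ℂ) (hf : Integrable f) (c₁ c₂ : ℂ)
    (v w : V) :
    𝓕 (fun x ↦ f x * (c₁ * 𝐞 ⟪x, v⟫ + c₂ * 𝐞 (-⟪x, v⟫))) w =
      c₁ * 𝓕 f (w - v) + c₂ * 𝓕 f (w + v) := by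
  have integrable_modulation (v : V) : Integrable (fun x ↦ 𝐞 ⟪x, v⟫ • f x) := by
    simpa [inner_neg_right] using (fourierIntegral_convergent_iff (-v)).2 hf
  have hsplit : (fun x ↦ f x * (c₁ * 𝐞 ⟪x, v⟫ + c₂ * 𝐞 (-⟪x, v⟫))) =
      c₁ • (fun x ↦ 𝐞 ⟪x, v⟫ • f x) + c₂ • (fun x ↦ 𝐞 ⟪x, -v⟫ • f x) := by
    ext x
    simp only [Pi.add_apply, Pi.smul_apply, Circle.smul_def, smul_eq_mul, inner_neg_right]
    ring
  change VectorFourier.fourierIntegral 𝐞 volume (innerₗ V) _ w = _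
  rw [hsplit, VectorFourier.fourierIntegral_add continuous_fourierChar continuous_inner
    ((integrable_modulation v).smul c₁) ((integrable_modulation (-v)).smul c₂),
    VectorFourier.fourierIntegral_const_smul, VectorFourier.fourierIntegral_const_smul]
  change c₁ * 𝓕 (fun x ↦ 𝐞 ⟪x, v⟫ • f x) w + c₂ * 𝓕 (fun x ↦ 𝐞 ⟪x, -v⟫ • f x) w = _
  rw [fourier_fourierChar_smul, fourier_fourierChar_smul, sub_neg_eq_add]

theorem ofReal_sin_two_pi_mul (t : ℝ) :
    (sin (2 * π * t) : ℂ) = -(Complex.I / 2) * 𝐞 t + Complex.I / 2 * 𝐞 (-t) := by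
  simp only [fourierChar_apply, Complex.ofReal_sin, Complex.sin]
  push_cast
  ring_nf

theorem ofReal_cos_two_pi_mul (t : ℝ) :
    (cos (2 * π * t) : ℂ) = 2⁻¹ * 𝐞 t + 2⁻¹ * 𝐞 (-t) := by
  simp only [fourierChar_apply, Complex.ofReal_cos, Complex.cos]
  push_cast
  ring_nf

theorem fourier_mul_sin_inner_eq_hilbert_cos (f : V → ℂ) (hf : Integrable f) (v : V)
    (hband : ∀ ξ : V, ‖v‖ ≤ ‖ξ‖ → 𝓕 f ξ = 0) (w : V) :
    𝓕 (fun x ↦ f x * (sin (2 * π * ⟪x, v⟫) : ℂ)) w =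
      -Complex.I * (sign ⟪v, w⟫ : ℂ) * 𝓕 (fun x ↦ f x * (cos (2 * π * ⟪x, v⟫) : ℂ)) w := by
  simp_rw [ofReal_sin_two_pi_mul, ofReal_cos_two_pi_mul,
    fourier_mul_fourierChar_combination f hf]
  rcases lt_trichotomy ⟪v, w⟫ 0 with hneg | hzero | hpos
  · rw [hband _ (norm_le_norm_sub_of_inner_nonpos hneg.le), sign_of_neg hneg]
    push_cast
    ring
  · rw [hband _ (norm_le_norm_sub_of_inner_nonpos hzero.le),
      hband _ (norm_le_norm_add_of_inner_nonneg hzero.ge), hzero, sign_zero]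
    simp
  · rw [hband _ (norm_le_norm_add_of_inner_nonneg hpos.le), sign_of_pos hpos]
    push_cast
    ring

end Real

end

/-- Directional Hilbert transform of a bandlimited windowed plane wave: the directional
Hilbert transform along the unit vector `u` takes the windowed directional cosine
`φ(x) cos(2π Ω ⟨u, x⟩)` to the windowed directional sine, preserving the window. -/
theorem directional_hilbert_of_windowed_plane_wave
    (Ω : ℝ) (hΩ : 0 < Ω) (u : EuclideanSpace ℝ (Fin 2)) (hu : ‖u‖ = 1)
    (φ : EuclideanSpace ℝ (Fin 2) → ℂ) (hφ : Integrable φ)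
    (hband : ∀ ω : EuclideanSpace ℝ (Fin 2), Ω ≤ ‖ω‖ → 𝓕 φ ω = 0) :
    ∀ ω : EuclideanSpace ℝ (Fin 2),
      𝓕 (fun x : EuclideanSpace ℝ (Fin 2) =>
          φ x * (Real.sin (2 * π * Ω * ⟪u, x⟫) : ℂ)) ω =
        -Complex.I * (Real.sign ⟪u, ω⟫ : ℂ) *
          𝓕 (fun x : EuclideanSpace ℝ (Fin 2) =>
              φ x * (Real.cos (2 * π * Ω * ⟪u, x⟫) : ℂ)) ω := by
  intro ω
  have hnorm : ‖Ω • u‖ = Ω := by rw [norm_smul, hu, mul_one, Real.norm_of_nonneg hΩ.le]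
  have hphase (x : EuclideanSpace ℝ (Fin 2)) : 2 * π * Ω * ⟪u, x⟫ = 2 * π * ⟪x, Ω • u⟫ := by
    rw [real_inner_smul_right, real_inner_comm]
    ring
  have hsign : Real.sign ⟪u, ω⟫ = Real.sign ⟪Ω • u, ω⟫ := by
    rw [real_inner_smul_left, Real.sign_mul_of_pos hΩ]
  simp_rw [hphase, hsign]
  exact Real.fourier_mul_sin_inner_eq_hilbert_cos φ hφ (Ω • u) (by rwa [hnorm]) ω
end

section
/- (Proposition 2, fractional directional Hilbert transform of a windowed plane wave.) Let Ω > 0, τ ∈ ℝ, let u ∈ ℝ² be a unit vector, and let φ : ℝ² → ℂ be integrable with 𝓕φ(ω) = 0 whenever ‖ω‖ ≥ Ω. Then for every ω ∈ ℝ², 𝓕(x ↦ φ(x)·cos(2π Ω ⟨u, x⟩ + π τ))(ω) = (cos(πτ) + i·sin(πτ)·sign(⟨u, ω⟩))·𝓕(x ↦ φ(x)·cos(2π Ω ⟨u, x⟩))(ω). Equivalently, the fractional directional Hilbert transform 𝗛_{u,τ} = cos(πτ)·I − sin(πτ)·𝗛_u applied to φ(x)cos(2π Ω ⟨u, x⟩)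 equals φ(x)cos(2π Ω ⟨u, x⟩ + π τ): it acts only on the phase of the oscillation while the window remains fixed. -/
/-!
Writing `cos(2πΩ⟨u, x⟩ + θ) = (e^{iθ} e^{2πiΩ⟨u, x⟩} + e^{-iθ} e^{-2πiΩ⟨u, x⟩}) / 2` and using that
modulation shifts the spectrum, the Fourier transform of the windowed wave at `ω` is
`(e^{iθ} 𝓕φ(ω - Ωu) + e^{-iθ} 𝓕φ(ω + Ωu)) / 2`. Since `𝓕φ` vanishes outside the ball of radius
`Ω`, the first term can only be nonzero where `⟨u, ω⟩ > 0` and the second only where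
`⟨u, ω⟩ < 0`; there `e^{±iθ}` is exactly the multiplier `cos θ + i sin θ sign⟨u, ω⟩`.
-/

open MeasureTheory Complex
open scoped FourierTransform Real RealInnerProductSpace

namespace Real

variable {V E : Type*} [NormedAddCommGroup V] [InnerProductSpace ℝ V] [MeasurableSpace V]
  [BorelSpace V] [FiniteDimensional ℝ V] [NormedAddCommGroup E] [NormedSpace ℂ E]

theorem fourier_add_of_integrable {f g : V → E} (hf : Integrable f) (hg : Integrable g) :
    𝓕 (f + g) = 𝓕 f + 𝓕 g :=
  VectorFourier.fourierIntegral_add continuous_fourierChar continuous_inner hf hg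

theorem fourier_const_smul (c : ℂ) (f : V → E) : 𝓕 (c • f) = c • 𝓕 f :=
  VectorFourier.fourierIntegral_const_smul _ _ _ f c

theorem integrable_fourierChar_inner_smul {f : V → E} (hf : Integrable f) (v : V) :
    Integrable fun x => 𝐞 ⟪x, v⟫ • f x := by
  simpa using (fourierIntegral_convergent_iff (-v)).2 hf

theorem fourier_fourierChar_inner_smul (f : V → E) (v w : V) :
    𝓕 (fun x => 𝐞 ⟪x, v⟫ • f x) w = 𝓕 f (w - v) := by
  simp only [fourier_eq, smul_smul, ← AddChar.map_add_eq_mul, inner_sub_right, neg_sub,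
    neg_add_eq_sub]

theorem ofReal_cos_two_pi_mul_add (t θ : ℝ) :
    (cos (2 * π * t + θ) : ℂ) =
      (Complex.exp (θ * I) * 𝐞 t + Complex.exp (-θ * I) * 𝐞 (-t)) / 2 := by
  rw [ofReal_cos, Complex.cos, fourierChar_apply, fourierChar_apply, ← Complex.exp_add,
    ← Complex.exp_add]
  push_cast
  ring_nf

theorem fourier_mul_cos_inner_add {φ : V → ℂ} (hφ : Integrable φ) (c θ : ℝ) (u w : V) :
    𝓕 (fun x => φ x * (cos (2 * π * c * ⟪u, x⟫ + θ) : ℂ)) w =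
      (Complex.exp (θ * I) * 𝓕 φ (w - c • u) + Complex.exp (-θ * I) * 𝓕 φ (w + c • u)) / 2 := by
  have hsplit : (fun x => φ x * (cos (2 * π * c * ⟪u, x⟫ + θ) : ℂ)) =
      (Complex.exp (θ * I) / 2) • (fun x => 𝐞 ⟪x, c • u⟫ • φ x) +
        (Complex.exp (-θ * I) / 2) • (fun x => 𝐞 ⟪x, -(c • u)⟫ • φ x) := by
    ext x
    simp only [Pi.add_apply, Pi.smul_apply, Circle.smul_def, smul_eq_mul, real_inner_smul_right,
      inner_neg_right, real_inner_comm x u]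
    rw [mul_assoc (2 * π), ofReal_cos_two_pi_mul_add]
    ring
  rw [hsplit, fourier_add_of_integrable ((integrable_fourierChar_inner_smul hφ _).smul _)
    ((integrable_fourierChar_inner_smul hφ _).smul _), fourier_const_smul, fourier_const_smul,
    Pi.add_apply, Pi.smul_apply, Pi.smul_apply, fourier_fourierChar_inner_smul,
    fourier_fourierChar_inner_smul, sub_neg_eq_add, smul_eq_mul, smul_eq_mul]
  ring

end Real

theorem inner_pos_of_norm_sub_smul_lt {V : Type*} [NormedAddCommGroup V] [InnerProductSpace ℝ V]
    {u w : V} (hu : ‖u‖ = 1) {c : ℝ} (h : ‖w - c • u‖ < c) : 0 < ⟪u, w⟫ := by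
  have := real_inner_le_norm u (c • u - w)
  rw [hu, one_mul, norm_sub_rev, inner_sub_right, real_inner_smul_right,
    real_inner_self_eq_norm_sq, hu] at this
  linarith

theorem inner_neg_of_norm_add_smul_lt {V : Type*} [NormedAddCommGroup V] [InnerProductSpace ℝ V]
    {u w : V} (hu : ‖u‖ = 1) {c : ℝ} (h : ‖w + c • u‖ < c) : ⟪u, w⟫ < 0 := by
  have := inner_pos_of_norm_sub_smul_lt (w := -w) hu (by rwa [← neg_add', norm_neg])
  rwa [inner_neg_right, neg_pos] at this

theorem cos_add_I_mul_sin_mul_sign_of_pos {t : ℝ} (ht : 0 < t) (θ : ℝ) :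
    (Real.cos θ : ℂ) + I * Real.sin θ * (Real.sign t : ℂ) = Complex.exp (θ * I) := by
  rw [Real.sign_of_pos ht, Complex.exp_mul_I]
  push_cast
  ring

theorem cos_add_I_mul_sin_mul_sign_of_neg {t : ℝ} (ht : t < 0) (θ : ℝ) :
    (Real.cos θ : ℂ) + I * Real.sin θ * (Real.sign t : ℂ) = Complex.exp (-θ * I) := by
  rw [Real.sign_of_neg ht, Complex.exp_mul_I, Complex.cos_neg, Complex.sin_neg]
  push_cast
  ring

theorem exp_mul_I_mul_add_exp_neg_mul_I_mul {a b : ℂ} {t : ℝ} (ha : a = 0 ∨ 0 < t)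
    (hb : b = 0 ∨ t < 0) (θ : ℝ) :
    Complex.exp (θ * I) * a + Complex.exp (-θ * I) * b =
      ((Real.cos θ : ℂ) + I * Real.sin θ * (Real.sign t : ℂ)) * (a + b) := by
  rcases ha with rfl | ht
  · rcases hb with rfl | ht
    · simp
    · rw [cos_add_I_mul_sin_mul_sign_of_neg ht]
      ring
  · obtain rfl : b = 0 := hb.resolve_right ht.not_gt
    rw [cos_add_I_mul_sin_mul_sign_of_pos ht]
    ring

theorem fractional_directional_hilbert_of_windowed_plane_wave_general
    (Ω : ℝ) (τ : ℝ) (u : EuclideanSpace ℝ (Fin 2)) (hu : ‖u‖ = 1)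
    (φ : EuclideanSpace ℝ (Fin 2) → ℂ) (hφ : Integrable φ)
    (hband : ∀ ω : EuclideanSpace ℝ (Fin 2), Ω ≤ ‖ω‖ → 𝓕 φ ω = 0) :
    ∀ ω : EuclideanSpace ℝ (Fin 2),
      𝓕 (fun x : EuclideanSpace ℝ (Fin 2) =>
          φ x * (Real.cos (2 * π * Ω * ⟪u, x⟫ + π * τ) : ℂ)) ω =
        ((Real.cos (π * τ) : ℂ) +
            Complex.I * (Real.sin (π * τ) : ℂ) * (Real.sign ⟪u, ω⟫ : ℂ)) *
          𝓕 (fun x : EuclideanSpace ℝ (Fin 2) =>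
              φ x * (Real.cos (2 * π * Ω * ⟪u, x⟫) : ℂ)) ω := by
  intro ω
  have hplain := Real.fourier_mul_cos_inner_add hφ Ω 0 u ω
  simp only [add_zero, ofReal_zero, zero_mul, neg_zero, Complex.exp_zero, one_mul] at hplain
  have hlow : 𝓕 φ (ω - Ω • u) = 0 ∨ 0 < ⟪u, ω⟫ :=
    (le_or_gt Ω _).imp (hband _) (inner_pos_of_norm_sub_smul_lt hu)
  have hhigh : 𝓕 φ (ω + Ω • u) = 0 ∨ ⟪u, ω⟫ < 0 :=
    (le_or_gt Ω _).imp (hband _) (inner_neg_of_norm_add_smul_lt hu)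
  rw [Real.fourier_mul_cos_inner_add hφ, hplain,
    exp_mul_I_mul_add_exp_neg_mul_I_mul hlow hhigh, mul_div_assoc]

/-- Proposition 2: the fractional directional Hilbert transform
`𝗛_{u,τ} = cos(πτ) I - sin(πτ) 𝗛_u` applied to the bandlimited windowed plane wave
`φ(x) cos(2π Ω ⟨u, x⟩)` yields `φ(x) cos(2π Ω ⟨u, x⟩ + π τ)`; on the Fourier side it
multiplies by `cos(πτ) + i sin(πτ) sign(⟨u, ω⟩)`. -/
theorem fractional_directional_hilbert_of_windowed_plane_wave
    (Ω : ℝ) (hΩ : 0 < Ω) (τ : ℝ) (u : EuclideanSpace ℝ (Fin 2)) (hu : ‖u‖ = 1)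
    (φ : EuclideanSpace ℝ (Fin 2) → ℂ) (hφ : Integrable φ)
    (hband : ∀ ω : EuclideanSpace ℝ (Fin 2), Ω ≤ ‖ω‖ → 𝓕 φ ω = 0) :
    ∀ ω : EuclideanSpace ℝ (Fin 2),
      𝓕 (fun x : EuclideanSpace ℝ (Fin 2) =>
          φ x * (Real.cos (2 * π * Ω * ⟪u, x⟫ + π * τ) : ℂ)) ω =
        ((Real.cos (π * τ) : ℂ) +
            Complex.I * (Real.sin (π * τ) : ℂ) * (Real.sign ⟪u, ω⟫ : ℂ)) *
          𝓕 (fun x : EuclideanSpace ℝ (Fin 2) =>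
              φ x * (Real.cos (2 * π * Ω * ⟪u, x⟫) : ℂ)) ω :=
  fractional_directional_hilbert_of_windowed_plane_wave_general Ω τ u hu φ hφ hband
end
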